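/- arXiv:2508.02928 — 4 statements merged into one kernel-verified Lean document; each statement's English description precedes it below -/
import Mathlib

section
/- If all parameters Λ, ρ, β₁, β₂, μ, δ, γ, α, λ_S, λ_E, λ_I, λ_Q, λ_R are nonnegative, φ(k) > 0, r(k) > 0, and at time level n all grid values S, E, I, Q, R at all grid points are nonnegative, then the values at time level n+1 produced by the explicit NSFD update are nonnegative at every grid point (unconditional positivity of the NSFD scheme). -/
/-- Unconditional positivity of the 2D NSFD scheme (eq:model2). -/
theorem nsfd_scheme_positivity
    (Λ ρ β₁ β₂ μ δ γ α lamS lamE lamI lamQ lamR φ r : ℝ)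
    (hΛ : 0 ≤ Λ) (hρ : 0 ≤ ρ) (hβ₁ : 0 ≤ β₁) (hβ₂ : 0 ≤ β₂) (hμ : 0 ≤ μ)
    (hδ : 0 ≤ δ) (hγ : 0 ≤ γ) (hα : 0 ≤ α)
    (hlamS : 0 ≤ lamS) (hlamE : 0 ≤ lamE) (hlamI : 0 ≤ lamI) (hlamQ : 0 ≤ lamQ) (hlamR : 0 ≤ lamR)
    (hφ : 0 < φ) (hr : 0 < r)
    (S E I Q R S' E' I' Q' R' : ℤ → ℤ → ℝ)
    (hS : ∀ j l, 0 ≤ S j l) (hE : ∀ j l, 0 ≤ E j l) (hI : ∀ j l, 0 ≤ I j l)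
    (hQ : ∀ j l, 0 ≤ Q j l) (hR : ∀ j l, 0 ≤ R j l)
    (hS' : ∀ j l, S' j l =
      (S j l + lamS * r * (S (j-1) l + S (j+1) l + S j (l-1) + S j (l+1))
        + φ * (Λ + ρ * Q j l))
      / (1 + 4 * lamS * r + φ * (β₁ * E j l + β₂ * I j l + μ)))
    (hE' : ∀ j l, E' j l =
      (E j l + lamE * r * (E (j-1) l + E (j+1) l + E j (l-1) + E j (l+1))
        + φ * (β₁ * E j l * S' j l))
      / (1 + 4 * lamE * r + φ * (δ + μ)))
    (hI' : ∀ j l, I' j l =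
      (I j l + lamI * r * (I (j-1) l + I (j+1) l + I j (l-1) + I j (l+1))
        + φ * (β₂ * I j l * S' j l + δ * E' j l))
      / (1 + 4 * lamI * r + φ * (γ + μ)))
    (hQ' : ∀ j l, Q' j l =
      (Q j l + lamQ * r * (Q (j-1) l + Q (j+1) l + Q j (l-1) + Q j (l+1))
        + φ * (γ * I' j l))
      / (1 + 4 * lamQ * r + φ * (α + ρ + μ)))
    (hR' : ∀ j l, R' j l =
      (R j l + lamR * r * (R (j-1) l + R (j+1) l + R j (l-1) + R j (l+1))
        + φ * (α * Q' j l))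
      / (1 + 4 * lamR * r + φ * μ)) :
    ∀ j l, 0 ≤ S' j l ∧ 0 ≤ E' j l ∧ 0 ≤ I' j l ∧ 0 ≤ Q' j l ∧ 0 ≤ R' j l := by
  intro j l
  have hSn : 0 ≤ S' j l := by
    rw [hS' j l]
    have hS0 : 0 ≤ S j l := hS j l
    have hS1 : 0 ≤ S (j-1) l := hS (j-1) l
    have hS2 : 0 ≤ S (j+1) l := hS (j+1) l
    have hS3 : 0 ≤ S j (l-1) := hS j (l-1)
    have hS4 : 0 ≤ S j (l+1) := hS j (l+1)
    have hq : 0 ≤ Q j l := hQ j l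
    have he : 0 ≤ E j l := hE j l
    have hi : 0 ≤ I j l := hI j l
    apply div_nonneg <;> positivity
  have hEn : 0 ≤ E' j l := by
    rw [hE' j l]
    have hE0 : 0 ≤ E j l := hE j l
    have hE1 : 0 ≤ E (j-1) l := hE (j-1) l
    have hE2 : 0 ≤ E (j+1) l := hE (j+1) l
    have hE3 : 0 ≤ E j (l-1) := hE j (l-1)
    have hE4 : 0 ≤ E j (l+1) := hE j (l+1)
    apply div_nonneg <;> positivity
  have hIn : 0 ≤ I' j l := by
    rw [hI' j l]
    have hI0 : 0 ≤ I j l := hI j l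
    have hI1 : 0 ≤ I (j-1) l := hI (j-1) l
    have hI2 : 0 ≤ I (j+1) l := hI (j+1) l
    have hI3 : 0 ≤ I j (l-1) := hI j (l-1)
    have hI4 : 0 ≤ I j (l+1) := hI j (l+1)
    apply div_nonneg <;> positivity
  have hQn : 0 ≤ Q' j l := by
    rw [hQ' j l]
    have hQ0 : 0 ≤ Q j l := hQ j l
    have hQ1 : 0 ≤ Q (j-1) l := hQ (j-1) l
    have hQ2 : 0 ≤ Q (j+1) l := hQ (j+1) l
    have hQ3 : 0 ≤ Q j (l-1) := hQ j (l-1)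
    have hQ4 : 0 ≤ Q j (l+1) := hQ j (l+1)
    apply div_nonneg <;> positivity
  have hRn : 0 ≤ R' j l := by
    rw [hR' j l]
    have hR0 : 0 ≤ R j l := hR j l
    have hR1 : 0 ≤ R (j-1) l := hR (j-1) l
    have hR2 : 0 ≤ R (j+1) l := hR (j+1) l
    have hR3 : 0 ≤ R j (l-1) := hR j (l-1)
    have hR4 : 0 ≤ R j (l+1) := hR j (l+1)
    apply div_nonneg <;> positivity
  exact ⟨hSn, hEn, hIn, hQn, hRn⟩
end

section
/- For the NSFD update of the susceptible compartment, if 0 ≤ S⁽ⁿ⁾_{j,l} ≤ M for all j,l and Λ·φ + ρ·φ·M_Q ≤ M·φ·μ, where M_Q bounds Q⁽ⁿ⁾, then S⁽ⁿ⁺¹⁾_{j,l} ≤ M for all j,l (boundedness preservation). -/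
/-- Boundedness preservation for the susceptible compartment of the NSFD scheme. -/
theorem nsfd_S_bounded
    (Λ ρ β₁ β₂ μ lamS φ r M MQ : ℝ)
    (hΛ : 0 ≤ Λ) (hρ : 0 ≤ ρ) (hβ₁ : 0 ≤ β₁) (hβ₂ : 0 ≤ β₂) (hμ : 0 ≤ μ)
    (hlamS : 0 ≤ lamS) (hφ : 0 < φ) (hr : 0 < r)
    (S E I Q S' : ℤ → ℤ → ℝ)
    (hS0 : ∀ j l, 0 ≤ S j l) (hSM : ∀ j l, S j l ≤ M)
    (hE : ∀ j l, 0 ≤ E j l) (hI : ∀ j l, 0 ≤ I j l)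
    (hQ0 : ∀ j l, 0 ≤ Q j l) (hQM : ∀ j l, Q j l ≤ MQ)
    (hcond : Λ + ρ * MQ ≤ μ * M)
    (hS' : ∀ j l, S' j l =
      (S j l + lamS * r * (S (j-1) l + S (j+1) l + S j (l-1) + S j (l+1))
        + φ * (Λ + ρ * Q j l))
      / (1 + 4 * lamS * r + φ * (β₁ * E j l + β₂ * I j l + μ))) :
    ∀ j l, S' j l ≤ M := by
  intro j l
  have hM : 0 ≤ M := le_trans (hS0 j l) (hSM j l)
  have hden : 0 < 1 + 4 * lamS * r + φ * (β₁ * E j l + β₂ * I j l + μ) := by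
    have : 0 ≤ β₁ * E j l + β₂ * I j l + μ :=
      add_nonneg (add_nonneg (mul_nonneg hβ₁ (hE j l)) (mul_nonneg hβ₂ (hI j l))) hμ
    nlinarith [mul_nonneg hlamS hr.le, mul_nonneg hφ.le this]
  rw [hS' j l, div_le_iff₀ hden]
  have hQ : Λ + ρ * Q j l ≤ μ * M := by
    nlinarith [hQM j l]
  nlinarith [hSM j l, hSM (j-1) l, hSM (j+1) l, hSM j (l-1), hSM j (l+1),
    mul_nonneg hlamS hr.le, mul_nonneg (mul_nonneg hβ₁ (hE j l)) hM,
    mul_nonneg (mul_nonneg hβ₂ (hI j l)) hM, mul_nonneg hφ.le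
      (add_nonneg (mul_nonneg (mul_nonneg hβ₁ (hE j l)) hM)
        (mul_nonneg (mul_nonneg hβ₂ (hI j l)) hM))]
end

section
/- If R₀ = max{β₁Λ/(μ(μ+δ)), β₂Λ/(μ(μ+γ))} < 1, then all five eigenvalues of the Jacobian of the SEIQR reaction system at the disease-free equilibrium (Λ/μ, 0, 0, 0, 0) have negative real part. -/
set_option maxHeartbeats 2000000 in
set_option maxRecDepth 4000 in
/-- If R₀ < 1 then all eigenvalues of the Jacobian at the DFE are negative. -/
theorem dfe_jacobian_eigenvalues_negative (Λ β₁ β₂ μ δ γ α ρ : ℝ)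
    (hΛ : 0 < Λ) (hβ₁ : 0 < β₁) (hβ₂ : 0 < β₂) (hμ : 0 < μ)
    (hδ : 0 < δ) (hγ : 0 < γ) (hα : 0 < α) (hρ : 0 < ρ)
    (hR0 : max (β₁ * Λ / (μ * (μ + δ))) (β₂ * Λ / (μ * (μ + γ))) < 1) :
    ∀ x ∈ spectrum ℝ
      (!![-μ, -(β₁ * Λ / μ), -(β₂ * Λ / μ), ρ, 0;
          0, β₁ * Λ / μ - (μ + δ), 0, 0, 0;
          0, δ, β₂ * Λ / μ - (μ + γ), 0, 0;
          0, 0, γ, -(μ + ρ + α), 0;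
          0, 0, 0, α, -μ] : Matrix (Fin 5) (Fin 5) ℝ), x < 0 := by
  intro x hx
  rw [spectrum.mem_iff, Matrix.isUnit_iff_isUnit_det, isUnit_iff_ne_zero, not_ne_iff] at hx
  have hN : (algebraMap ℝ (Matrix (Fin 5) (Fin 5) ℝ)) x -
      (!![-μ, -(β₁ * Λ / μ), -(β₂ * Λ / μ), ρ, 0;
          0, β₁ * Λ / μ - (μ + δ), 0, 0, 0;
          0, δ, β₂ * Λ / μ - (μ + γ), 0, 0;
          0, 0, γ, -(μ + ρ + α), 0;
          0, 0, 0, α, -μ] : Matrix (Fin 5) (Fin 5) ℝ) =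
      !![x + μ, β₁ * Λ / μ, β₂ * Λ / μ, -ρ, 0;
         0, x - (β₁ * Λ / μ - (μ + δ)), 0, 0, 0;
         0, -δ, x - (β₂ * Λ / μ - (μ + γ)), 0, 0;
         0, 0, -γ, x + (μ + ρ + α), 0;
         0, 0, 0, -α, x + μ] := by
    ext i j
    fin_cases i <;> fin_cases j <;>
      simp [Matrix.algebraMap_matrix_apply, Matrix.vecHead, Matrix.vecTail] <;> ring
  rw [hN] at hx
  have hfact : (x + μ)^2 * (x - (β₁ * Λ / μ - (μ + δ))) *
      (x - (β₂ * Λ / μ - (μ + γ))) * (x + (μ + ρ + α)) = 0 := by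
    rw [show ((x + μ)^2 * (x - (β₁ * Λ / μ - (μ + δ))) * (x - (β₂ * Λ / μ - (μ + γ))) * (x + (μ + ρ + α))) =
      Matrix.det !![x + μ, β₁ * Λ / μ, β₂ * Λ / μ, -ρ, 0;
           0, x - (β₁ * Λ / μ - (μ + δ)), 0, 0, 0;
           0, -δ, x - (β₂ * Λ / μ - (μ + γ)), 0, 0;
           0, 0, -γ, x + (μ + ρ + α), 0;
           0, 0, 0, -α, x + μ] from ?_, hx]
    simp [Matrix.det_succ_column_zero, Fin.sum_univ_succ]
    ring
  have ha : β₁ * Λ / μ - (μ + δ) < 0 := by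
    have h1 : β₁ * Λ / (μ * (μ + δ)) < 1 := lt_of_le_of_lt (le_max_left _ _) hR0
    have h2 : β₁ * Λ < μ * (μ + δ) := by
      rwa [div_lt_one (by positivity)] at h1
    rw [sub_neg, div_lt_iff₀ hμ]
    linarith
  have hb : β₂ * Λ / μ - (μ + γ) < 0 := by
    have h1 : β₂ * Λ / (μ * (μ + γ)) < 1 := lt_of_le_of_lt (le_max_right _ _) hR0
    have h2 : β₂ * Λ < μ * (μ + γ) := by
      rwa [div_lt_one (by positivity)] at h1
    rw [sub_neg, div_lt_iff₀ hμ]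
    linarith
  rcases mul_eq_zero.mp hfact with h | h
  · rcases mul_eq_zero.mp h with h | h
    · rcases mul_eq_zero.mp h with h | h
      · have : x + μ = 0 := by
          have := pow_eq_zero_iff (n := 2) (by norm_num) |>.mp h
          exact this
        linarith
      · linarith [sub_eq_zero.mp h]
    · linarith [sub_eq_zero.mp h]
  · linarith [eq_neg_of_add_eq_zero_left h]
end

section
/- In the 1D NSFD update for the recovered compartment R, if R⁽ⁿ⁾_j ≥ 0 for all j and Q⁽ⁿ⁺¹⁾_j ≥ 0 for all j, with λ_R, α, μ ≥ 0, φ > 0, r > 0 and 1 + 2λ_R r + φμ > 0, then R⁽ⁿ⁺¹⁾_j = (R⁽ⁿ⁾_j + λ_R r(R⁽ⁿ⁾_{j−1} + R⁽ⁿ⁾_{j+1}) + φ·α·Q⁽ⁿ⁺¹⁾_j)/(1 + 2λ_R r + φμ) ≥ 0, and moreover, if max_j R⁽ⁿ⁾_j ≤ M and α·max_j Q⁽ⁿ⁺¹⁾_j ≤ μM, then R⁽ⁿ⁺¹⁾_j ≤ M for all j. -/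
/-- Positivity and boundedness preservation for the 1D NSFD update of R. -/
theorem nsfd_R_positivity_boundedness
    (lamR α μ φ r M : ℝ)
    (hlamR : 0 ≤ lamR) (hα : 0 ≤ α) (hμ : 0 ≤ μ) (hφ : 0 < φ) (hr : 0 < r)
    (hden : 0 < 1 + 2 * lamR * r + φ * μ)
    (Rn Qn1 Rn1 : ℤ → ℝ)
    (hRpos : ∀ j, 0 ≤ Rn j) (hQpos : ∀ j, 0 ≤ Qn1 j)
    (hupd : ∀ j, Rn1 j =
      (Rn j + lamR * r * (Rn (j - 1) + Rn (j + 1)) + φ * α * Qn1 j)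
        / (1 + 2 * lamR * r + φ * μ)) :
    (∀ j, 0 ≤ Rn1 j) ∧
    (∀ MQ : ℝ, (∀ j, Rn j ≤ M) → (∀ j, Qn1 j ≤ MQ) → α * MQ ≤ μ * M →
      ∀ j, Rn1 j ≤ M) := by
  constructor
  · intro j
    rw [hupd j]
    apply div_nonneg _ hden.le
    have := hRpos j; have := hRpos (j-1); have := hRpos (j+1); have := hQpos j
    positivity
  · intro MQ hRM hQM hαμ j
    rw [hupd j, div_le_iff₀ hden]
    have h1 : Rn j ≤ M := hRM j
    have h2 : lamR * r * (Rn (j-1) + Rn (j+1)) ≤ lamR * r * (M + M) := by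
      apply mul_le_mul_of_nonneg_left (add_le_add (hRM _) (hRM _)) (by positivity)
    have h3 : φ * α * Qn1 j ≤ φ * (μ * M) := by
      calc φ * α * Qn1 j = φ * (α * Qn1 j) := by ring
        _ ≤ φ * (α * MQ) := by
            apply mul_le_mul_of_nonneg_left (mul_le_mul_of_nonneg_left (hQM j) hα) hφ.le
        _ ≤ φ * (μ * M) := mul_le_mul_of_nonneg_left hαμ hφ.le
    nlinarith
end
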